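/- arXiv:1001.2616 — 6 statements merged into one kernel-verified Lean document; each statement's English description precedes it below -/
import Mathlib

section
/- Let M, F, e be real numbers with M > 0, F > 0 and e² ≤ M². Then the event-horizon area of the Reissner–Nordström–Vaidya black hole exceeds the sum of the event-horizon areas of the Reissner–Nordström and Vaidya black holes: 8π[(M+F)² − e²/2 + (M+F)·√((M+F)² − e²)] > 8π[M² − e²/2 + M·√(M² − e²)] + 16πF². -/
open Real

/-- The event-horizon area of the Reissner–Nordström–Vaidya black hole exceeds the
sum of the event-horizon areas of the Reissner–Nordström and Vaidya black holes. -/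
theorem rnv_area_superadditive (M F e : ℝ) (hM : 0 < M) (hF : 0 < F)
    (he : e ^ 2 ≤ M ^ 2) :
    8 * π * ((M + F) ^ 2 - e ^ 2 / 2 + (M + F) * Real.sqrt ((M + F) ^ 2 - e ^ 2)) >
      8 * π * (M ^ 2 - e ^ 2 / 2 + M * Real.sqrt (M ^ 2 - e ^ 2)) + 16 * π * F ^ 2 := by
  set a := Real.sqrt (M ^ 2 - e ^ 2) with ha
  set b := Real.sqrt ((M + F) ^ 2 - e ^ 2) with hb
  have hMe : (0:ℝ) ≤ M ^ 2 - e ^ 2 := by linarith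
  have hMFe : (0:ℝ) ≤ (M + F) ^ 2 - e ^ 2 := by nlinarith
  have ha2 : a ^ 2 = M ^ 2 - e ^ 2 := Real.sq_sqrt hMe
  have hb2 : b ^ 2 = (M + F) ^ 2 - e ^ 2 := Real.sq_sqrt hMFe
  have ha0 : 0 ≤ a := Real.sqrt_nonneg _
  have hb0 : 0 ≤ b := Real.sqrt_nonneg _
  have haM : a ≤ M := by nlinarith
  have hbaF : a + F ≤ b := by nlinarith
  have hbF : F < b := by nlinarith
  have hpi := Real.pi_pos
  have key : 0 < (M + F) ^ 2 + (M + F) * b - (M ^ 2 + M * a + 2 * F ^ 2) := by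
    nlinarith [mul_pos hM hF]
  nlinarith [mul_pos hpi key]
end

section
/- Let M, F, e be real numbers with M > 0, F > 0 and e² ≤ M². Then the event-horizon entropy of the Reissner–Nordström–Vaidya black hole exceeds the sum of the event-horizon entropies of the Reissner–Nordström and Vaidya black holes: 2π[(M+F)² − e²/2 + (M+F)·√((M+F)² − e²)] > 2π[M² − e²/2 + M·√(M² − e²)] + 4πF². -/
open Real

/-- The event-horizon entropy of the Reissner–Nordström–Vaidya black hole exceeds the
sum of the event-horizon entropies of the Reissner–Nordström and Vaidya black holes. -/
theorem rnv_entropy_superadditive (M F e : ℝ) (hM : 0 < M) (hF : 0 < F)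
    (he : e ^ 2 ≤ M ^ 2) :
    2 * π * ((M + F) ^ 2 - e ^ 2 / 2 + (M + F) * Real.sqrt ((M + F) ^ 2 - e ^ 2)) >
      2 * π * (M ^ 2 - e ^ 2 / 2 + M * Real.sqrt (M ^ 2 - e ^ 2)) + 4 * π * F ^ 2 := by
  have hA : F ^ 2 < (M + F) ^ 2 - e ^ 2 := by nlinarith
  have h1 : F < Real.sqrt ((M + F) ^ 2 - e ^ 2) := by
    have := Real.lt_sqrt hF.le (y := (M + F) ^ 2 - e ^ 2)
    exact this.mpr hA
  have h2 : Real.sqrt (M ^ 2 - e ^ 2) ≤ Real.sqrt ((M + F) ^ 2 - e ^ 2) :=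
    Real.sqrt_le_sqrt (by nlinarith)
  have hs : 0 ≤ Real.sqrt (M ^ 2 - e ^ 2) := Real.sqrt_nonneg _
  have hpi : 0 < π := Real.pi_pos
  have key : (M + F) ^ 2 - e ^ 2 / 2 + (M + F) * Real.sqrt ((M + F) ^ 2 - e ^ 2) >
      (M ^ 2 - e ^ 2 / 2 + M * Real.sqrt (M ^ 2 - e ^ 2)) + 2 * F ^ 2 := by
    nlinarith [mul_pos hM hF, mul_lt_mul_of_pos_left h1 hF,
      mul_le_mul_of_nonneg_left h2 hM.le]
  nlinarith [mul_lt_mul_of_pos_left key hpi]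
end

section
/- Let M, F, a, e be real numbers with M > 0, F > 0, 0 ≤ a ≤ F and a² + e² ≤ M². Then the event-horizon area of the Kerr–Newman–Vaidya black hole exceeds the sum of the event-horizon areas of the Kerr–Newman and rotating Vaidya black holes: 4π[2(M+F)² − e² + 2(M+F)·√((M+F)² − a² − e²)] > 4π[2M² − e² + 2M·√(M² − a² − e²)] + 4π[2F² + 2F·√(F² − a²)]. -/
open Real

/-- The event-horizon area of the Kerr–Newman–Vaidya black hole exceeds the sum of the
event-horizon areas of the Kerr–Newman and rotating Vaidya black holes. -/
theorem knv_area_superadditive (M F a e : ℝ) (hM : 0 < M) (hF : 0 < F)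
    (ha0 : 0 ≤ a) (haF : a ≤ F) (he : a ^ 2 + e ^ 2 ≤ M ^ 2) :
    4 * π * (2 * (M + F) ^ 2 - e ^ 2 +
        2 * (M + F) * Real.sqrt ((M + F) ^ 2 - a ^ 2 - e ^ 2)) >
      4 * π * (2 * M ^ 2 - e ^ 2 + 2 * M * Real.sqrt (M ^ 2 - a ^ 2 - e ^ 2)) +
        4 * π * (2 * F ^ 2 + 2 * F * Real.sqrt (F ^ 2 - a ^ 2)) := by
  have hpi := Real.pi_pos
  have hA : Real.sqrt (M ^ 2 - a ^ 2 - e ^ 2) ≤ Real.sqrt ((M + F) ^ 2 - a ^ 2 - e ^ 2) :=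
    Real.sqrt_le_sqrt (by nlinarith)
  have hB : Real.sqrt (F ^ 2 - a ^ 2) ≤ Real.sqrt ((M + F) ^ 2 - a ^ 2 - e ^ 2) :=
    Real.sqrt_le_sqrt (by nlinarith)
  have h1 : M * Real.sqrt (M ^ 2 - a ^ 2 - e ^ 2) ≤
      M * Real.sqrt ((M + F) ^ 2 - a ^ 2 - e ^ 2) :=
    mul_le_mul_of_nonneg_left hA hM.le
  have h2 : F * Real.sqrt (F ^ 2 - a ^ 2) ≤
      F * Real.sqrt ((M + F) ^ 2 - a ^ 2 - e ^ 2) :=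
    mul_le_mul_of_nonneg_left hB hF.le
  nlinarith [mul_pos hM hF, mul_pos hpi (mul_pos hM hF),
    mul_le_mul_of_nonneg_left h1 hpi.le, mul_le_mul_of_nonneg_left h2 hpi.le]
end

section
/- Let M, F be real numbers and let e : ℝ → ℝ be twice differentiable with e'(r)² + e(r)·e''(r) = 0 for all r ∈ ℝ. Then there exist real constants m₁ and C such that for every r ≠ 0: (i) the Weyl scalar expression (1/r⁴)·[e(r)² − r(M+F) + (r²/6)(e'(r)² + e(r)e''(r)) − r·e(r)·e'(r)] equals −(1/r⁴)·[r((M − m₁) + F) − C], and (ii) the Ricci scalar expression (1/(2r⁴))·[e(r)² − 2r·e(r)·e'(r)] + (1/(4r²))·[e'(r)² + e(r)e''(r)] equals C/(2r⁴). Hence one electrical radiation with variable charge e(r) changes the mass from M + F to (M − m₁) + F while the Maxwell scalar retains the constant charge C. -/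
open Real

/-- One electrical radiation of the variable-charged Reissner–Nordström–Vaidya black hole:
the Weyl scalar shows a change of mass from `M + F` to `(M − m₁) + F`, while the Ricci
scalar `φ₁₁` retains the constant charge `C` (unchanged Maxwell scalar). -/
theorem rnv_electrical_radiation (M F : ℝ) (e : ℝ → ℝ)
    (hd1 : Differentiable ℝ e) (hd2 : Differentiable ℝ (deriv e))
    (heq : ∀ r : ℝ, (deriv e r) ^ 2 + e r * deriv (deriv e) r = 0) :
    ∃ m₁ C : ℝ, ∀ r : ℝ, r ≠ 0 →
      (1 / r ^ 4) * ((e r) ^ 2 - r * (M + F)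
          + (r ^ 2 / 6) * ((deriv e r) ^ 2 + e r * deriv (deriv e) r)
          - r * e r * deriv e r) =
        -(1 / r ^ 4) * (r * ((M - m₁) + F) - C) ∧
      (1 / (2 * r ^ 4)) * ((e r) ^ 2 - 2 * r * e r * deriv e r)
          + (1 / (4 * r ^ 2)) * ((deriv e r) ^ 2 + e r * deriv (deriv e) r) =
        C / (2 * r ^ 4) := by
  set k : ℝ := e 0 * deriv e 0 with hk
  -- e * e' is constant
  have hconst : ∀ r : ℝ, e r * deriv e r = k := by
    have hdf : Differentiable ℝ (fun x => e x * deriv e x) := hd1.mul hd2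
    have hderiv0 : ∀ x, deriv (fun x => e x * deriv e x) x = 0 := by
      intro x
      rw [deriv_fun_mul (hd1 x) (hd2 x)]
      have := heq x
      nlinarith [this]
    intro r
    have := is_const_of_deriv_eq_zero hdf hderiv0 r 0
    simpa [hk] using this
  -- e^2 - 2 k r is constant
  have hsq : ∀ r : ℝ, (e r) ^ 2 = 2 * k * r + (e 0) ^ 2 := by
    have hdf : Differentiable ℝ (fun x => (e x) ^ 2 - 2 * k * x) := by
      exact (hd1.pow 2).sub (differentiable_const _ |>.mul differentiable_id)
    have hderiv0 : ∀ x, deriv (fun x => (e x) ^ 2 - 2 * k * x) x = 0 := by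
      intro x
      have h1 : HasDerivAt (fun x => (e x) ^ 2 - 2 * k * x)
          (2 * e x ^ 1 * deriv e x - 2 * k) x := by
        have := ((hd1 x).hasDerivAt.pow 2).sub
          ((hasDerivAt_id x).const_mul (2 * k))
        exact this.congr_deriv (by norm_num)
      rw [h1.deriv]
      have := hconst x
      nlinarith [this]
    intro r
    have := is_const_of_deriv_eq_zero hdf hderiv0 r 0
    have h0 : (e r) ^ 2 - 2 * k * r = (e 0) ^ 2 - 2 * k * 0 := by simpa using this
    linarith
  refine ⟨k, (e 0) ^ 2, fun r hr => ?_⟩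
  have h1 := hconst r
  have h2 := hsq r
  have h3 := heq r
  constructor
  · field_simp
    linear_combination 6*h2 + r^2*h3 + (-6*r)*h1
  · field_simp
    linear_combination 4*h2 + (-8*r)*h1 + (2*r^2)*h3
end

section
/- Let M, e, a be real constants and F a real number (the value f(u) of the Vaidya mass at a fixed u). For all real r, θ with r² + a²cos²θ ≠ 0, the Kerr–Newman–Vaidya metric matrix equals the rotating Vaidya metric matrix plus a Kerr–Schild term: g[M+F, e] = g[F, 0] + 2Q·ℓℓᵀ, where Q = −(rM − e²/2)/(r² + a²cos²θ) and ℓℓᵀ denotes the 4×4 matrix with entries ℓᵢℓⱼ for ℓ = (1, 0, 0, −a sin²θ). -/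
open Real

/-- The Kerr–Newman–Vaidya-type metric matrix with mass `m`, charge `q`, rotation `a`
at coordinates `(r, θ)` (indices `0,1,2,3` for `u,r,θ,φ`). -/
noncomputable def knvMetric (m q a r θ : ℝ) : Matrix (Fin 4) (Fin 4) ℝ :=
  !![1 - (2 * r * m - q ^ 2) / (r ^ 2 + a ^ 2 * Real.cos θ ^ 2), 1, 0,
      a * (2 * r * m - q ^ 2) * Real.sin θ ^ 2 / (r ^ 2 + a ^ 2 * Real.cos θ ^ 2);
    1, 0, 0, -a * Real.sin θ ^ 2;
    0, 0, -(r ^ 2 + a ^ 2 * Real.cos θ ^ 2), 0;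
    a * (2 * r * m - q ^ 2) * Real.sin θ ^ 2 / (r ^ 2 + a ^ 2 * Real.cos θ ^ 2),
      -a * Real.sin θ ^ 2, 0,
      -(((r ^ 2 + a ^ 2) ^ 2 -
            (r ^ 2 - 2 * r * m + a ^ 2 + q ^ 2) * a ^ 2 * Real.sin θ ^ 2) *
          Real.sin θ ^ 2 / (r ^ 2 + a ^ 2 * Real.cos θ ^ 2))]

/-- The null covector `ℓ = (1, 0, 0, −a sin²θ)`. -/
noncomputable def knvNull (a θ : ℝ) : Fin 4 → ℝ := ![1, 0, 0, -a * Real.sin θ ^ 2]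

/-- Kerr–Schild ansatz on the rotating Vaidya background:
`g[M+F, e] = g[F, 0] + 2Q ℓℓᵀ` with `Q = −(rM − e²/2)/(r² + a²cos²θ)`. -/
theorem knv_kerr_schild_on_vaidya (M e a F r θ : ℝ)
    (h : r ^ 2 + a ^ 2 * Real.cos θ ^ 2 ≠ 0) :
    knvMetric (M + F) e a r θ =
      knvMetric F 0 a r θ +
        (2 * (-(r * M - e ^ 2 / 2) / (r ^ 2 + a ^ 2 * Real.cos θ ^ 2))) •
          Matrix.vecMulVec (knvNull a θ) (knvNull a θ) := by
  ext i j
  fin_cases i <;> fin_cases j <;>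
    simp [knvMetric, knvNull, Matrix.vecMulVec, Matrix.smul_apply] <;>
    field_simp <;> ring
end

section
/- Let M, F, a, e be real numbers and let r satisfy r² − 2r(M+F) + a² + e² = 0, with r² + a² ≠ 0. Then for every θ with sin θ ≠ 0 and r² + a²cos²θ ≠ 0, the angular velocity −g_uφ/g_φφ = [a(2r(M+F) − e²)sin²θ/(r² + a²cos²θ)] / ([(r²+a²)² − (r² − 2r(M+F) + a² + e²)a²sin²θ]·sin²θ/(r² + a²cos²θ)) equals a·(2r(M+F) − e²)/(r²+a²)², which in turn equals a/(r²+a²). Hence the angular velocity of each horizon of the Kerr–Newman–Vaidya black hole is Ω_± = a(2r_±(M+F) − e²)/(r_±² + a²)². -/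
open Real

/-- At a horizon `r` of the Kerr–Newman–Vaidya black hole (a root of
`Δ = r² − 2r(M+F) + a² + e² = 0`), the angular velocity `−g_uφ/g_φφ` equals
`a(2r(M+F) − e²)/(r² + a²)²`, which equals `a/(r² + a²)`. -/
theorem knv_angular_velocity (M F a e r : ℝ)
    (hΔ : r ^ 2 - 2 * r * (M + F) + a ^ 2 + e ^ 2 = 0) (hra : r ^ 2 + a ^ 2 ≠ 0)
    (θ : ℝ) (hs : Real.sin θ ≠ 0) (hR : r ^ 2 + a ^ 2 * Real.cos θ ^ 2 ≠ 0) :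
    (a * (2 * r * (M + F) - e ^ 2) * Real.sin θ ^ 2 /
          (r ^ 2 + a ^ 2 * Real.cos θ ^ 2)) /
        (((r ^ 2 + a ^ 2) ^ 2 -
            (r ^ 2 - 2 * r * (M + F) + a ^ 2 + e ^ 2) * a ^ 2 * Real.sin θ ^ 2) *
          Real.sin θ ^ 2 / (r ^ 2 + a ^ 2 * Real.cos θ ^ 2)) =
      a * (2 * r * (M + F) - e ^ 2) / (r ^ 2 + a ^ 2) ^ 2 ∧
    a * (2 * r * (M + F) - e ^ 2) / (r ^ 2 + a ^ 2) ^ 2 = a / (r ^ 2 + a ^ 2) := by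
  have key : 2 * r * (M + F) - e ^ 2 = r ^ 2 + a ^ 2 := by linarith
  constructor
  · rw [hΔ, key]
    field_simp
    ring
  · rw [key]; field_simp
end
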